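/- For all nonnegative integers n and k: Ê_n^{(−k)} ≡ 0 (mod 2) if n is odd, and Ê_n^{(−k)} ≡ 1 (mod 2) if n is even. -/

import Mathlib

/-!
`l! S(k,l)` is the `l`-th forward difference of `x ↦ x ^ k` at `0`, so `2 Ê_n^{(-k)}` is an
integer. Modulo 4 each `(4l+3)^n + (4l+1)^n` is `(-1)^n + 1`, and telescoping
`g (y + 1) = g y + Δ g y` gives `∑_{l ≤ k} (-1)^l Δ^l f (0) = f (-1)` for `f` of degree `k`,
i.e. `∑_l (-1)^l l! S(k,l) = (-1)^k`. Hence `2 Ê_n^{(-k)} ≡ (-1)^n + 1 (mod 4)`.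
-/

/-- Stirling numbers of the second kind (as rationals),
`S(n,j) = (1/j!) ∑_{i=0}^{j} (-1)^{j-i} C(j,i) i^n`. -/
def stirling2 (n j : ℕ) : ℚ :=
  (1 / j.factorial) *
    ∑ i ∈ Finset.range (j + 1), (-1) ^ (j - i) * (j.choose i : ℚ) * (i : ℚ) ^ n

/-- Poly-Euler numbers of the second kind with negative index `-k`:
`Ê_n^{(-k)} = ((-1)^k/2) ∑_{l=0}^{k} (-1)^l l! S(k,l) ((4l+3)^n + (4l+1)^n)`. -/
def polyEulerSecondNeg (n k : ℕ) : ℚ :=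
  ((-1) ^ k / 2) *
    ∑ l ∈ Finset.range (k + 1),
      (-1) ^ l * (l.factorial : ℚ) * stirling2 k l *
        ((4 * (l : ℚ) + 3) ^ n + (4 * (l : ℚ) + 1) ^ n)

open Finset Function fwdDiff

theorem sum_neg_one_pow_smul_fwdDiff_iter {M G : Type*} [AddCommMonoid M] [AddCommGroup G]
    (h : M) (f : M → G) (y : M) (k : ℕ) :
    ∑ l ∈ range (k + 1), (-1 : ℤ) ^ l • Δ_[h] ^[l] f (y + h) =
      f y + (-1 : ℤ) ^ k • Δ_[h] ^[k + 1] f y := by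
  have shift (g : M → G) : g (y + h) = g y + Δ_[h] g y := by simp [fwdDiff]
  induction k with
  | zero => simp [shift f]
  | succ k ih =>
    rw [sum_range_succ, ih, shift (Δ_[h] ^[k + 1] f), ← iterate_succ_apply' (fwdDiff h),
      pow_succ]
    simp only [smul_add, neg_smul, mul_neg, mul_one]
    abel

theorem sum_neg_one_pow_mul_fwdDiff_iter_pow (k : ℕ) :
    ∑ l ∈ range (k + 1), (-1) ^ l * Δ_[1] ^[l] (fun x : ℤ ↦ x ^ k) 0 = (-1) ^ k := by
  simpa [fwdDiff_iter_pow_eq_zero_of_lt (Nat.lt_succ_self k)] using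
    sum_neg_one_pow_smul_fwdDiff_iter 1 (fun x : ℤ ↦ x ^ k) (-1) k

theorem factorial_mul_stirling2 (k l : ℕ) :
    (l.factorial : ℚ) * stirling2 k l = (Δ_[1] ^[l] (fun x : ℤ ↦ x ^ k) 0 : ℤ) := by
  rw [stirling2, ← mul_assoc, mul_one_div_cancel (by positivity), one_mul,
    fwdDiff_iter_eq_sum_shift]
  push_cast
  simp

theorem sum_mul_four_mul_add_pow_modEq_four (n : ℕ) (s : Finset ℕ) (c : ℕ → ℤ) :
    ∑ l ∈ s, c l * ((4 * l + 3) ^ n + (4 * l + 1) ^ n) ≡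
      (∑ l ∈ s, c l) * ((-1) ^ n + 1) [ZMOD 4] := by
  rw [sum_mul]
  refine Int.ModEq.sum fun l _ ↦ ?_
  have h3 : (4 * l + 3 : ℤ) ≡ -1 [ZMOD 4] := Int.modEq_iff_dvd.mpr ⟨-l - 1, by ring⟩
  have h1 : (4 * l + 1 : ℤ) ≡ 1 [ZMOD 4] := Int.modEq_iff_dvd.mpr ⟨-l, by ring⟩
  simpa using ((h3.pow n).add (h1.pow n)).mul_left (c l)

theorem two_mul_polyEulerSecondNeg (n k : ℕ) :
    2 * polyEulerSecondNeg n k =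
      (((-1) ^ k * ∑ l ∈ range (k + 1), (-1) ^ l * Δ_[1] ^[l] (fun x : ℤ ↦ x ^ k) 0 *
        ((4 * l + 3) ^ n + (4 * l + 1) ^ n) : ℤ) : ℚ) := by
  simp only [polyEulerSecondNeg, mul_assoc, factorial_mul_stirling2]
  push_cast
  ring

theorem exists_two_mul_polyEulerSecondNeg_eq_modEq (n k : ℕ) :
    ∃ e : ℤ, 2 * polyEulerSecondNeg n k = e ∧ e ≡ (-1) ^ n + 1 [ZMOD 4] := by
  refine ⟨_, two_mul_polyEulerSecondNeg n k, ?_⟩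
  have h := (sum_mul_four_mul_add_pow_modEq_four n (range (k + 1))
    fun l ↦ (-1) ^ l * Δ_[1] ^[l] (fun x : ℤ ↦ x ^ k) 0).mul_left ((-1) ^ k)
  rwa [sum_neg_one_pow_mul_fwdDiff_iter_pow, ← mul_assoc, ← mul_pow, neg_one_mul, neg_neg,
    one_pow, one_mul] at h

theorem polyEulerSecondNeg_parity (n k : ℕ) :
    (Odd n → ∃ z : ℤ, polyEulerSecondNeg n k = 2 * (z : ℚ)) ∧
    (Even n → ∃ z : ℤ, polyEulerSecondNeg n k = 2 * (z : ℚ) + 1) := by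
  obtain ⟨e, he, hmod⟩ := exists_two_mul_polyEulerSecondNeg_eq_modEq n k
  constructor
  · intro hn
    obtain ⟨z, hz⟩ : (4 : ℤ) ∣ e := by simpa [hn.neg_one_pow] using hmod.symm.dvd
    refine ⟨z, ?_⟩
    have : (e : ℚ) = 4 * z := by exact_mod_cast hz
    linarith
  · intro hn
    obtain ⟨z, hz⟩ : (4 : ℤ) ∣ e - 2 := by simpa [hn.neg_one_pow] using hmod.symm.dvd
    refine ⟨z, ?_⟩
    have : (e : ℚ) = 4 * z + 2 := by exact_mod_cast eq_add_of_sub_eq hz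
    linarith
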